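/- Let ≼ be a smooth Hamming relation. Then (μ*3) holds: μ(Π'×(Σ↾X''))↾X'' ⊆ μ(Σ)↾X'', where Π' is the set of all X'-sequences. (Adding all possible X'-branches cannot create new minimal X''-continuations.) -/

import Mathlib

/-- The Hamming (componentwise) relation on full sequences `α × β` built from the
component relations. -/
def hle {α β : Type*} (le' : α → α → Prop) (le'' : β → β → Prop)
    (σ τ : α × β) : Prop :=
  le' σ.1 τ.1 ∧ le'' σ.2 τ.2

/-- The strict part of a relation: `x ≺ y` iff `x ≼ y` and `x ≠ y`. -/
def slt {γ : Type*} (le : γ → γ → Prop) (x y : γ) : Prop :=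
  le x y ∧ x ≠ y

/-- `muRel le S`: the set of `≺`-minimal elements of `S`. -/
def muRel {γ : Type*} (le : γ → γ → Prop) (S : Set γ) : Set γ :=
  {x ∈ S | ¬ ∃ y ∈ S, slt le y x}

/-- Smoothness of `S`: every non-minimal element of `S` has a minimal element
strictly below it. -/
def IsSmooth {γ : Type*} (le : γ → γ → Prop) (S : Set γ) : Prop :=
  ∀ x ∈ S, x ∉ muRel le S → ∃ y ∈ muRel le S, slt le y x

theorem IsSmooth.exists_mem_muRel_eq_or_slt {γ : Type*} {le : γ → γ → Prop} {S : Set γ}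
    (hS : IsSmooth le S) {x : γ} (hx : x ∈ S) : ∃ y ∈ muRel le S, y = x ∨ slt le y x := by
  by_cases hmin : x ∈ muRel le S
  · exact ⟨x, hmin, Or.inl rfl⟩
  · obtain ⟨y, hy, hyx⟩ := hS x hx hmin
    exact ⟨y, hy, Or.inr hyx⟩

theorem snd_eq_of_mem_muRel_univ_prod {α β : Type*} {le' : α → α → Prop} {le'' : β → β → Prop}
    (hrefl' : ∀ a, le' a a) {T : Set β} {p : α × β}
    (hp : p ∈ muRel (hle le' le'') (Set.univ ×ˢ T)) {d : β} (hd : d ∈ T) (hdp : le'' d p.2) :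
    d = p.2 := by
  by_contra hne
  exact hp.2 ⟨(p.1, d), ⟨trivial, hd⟩, ⟨hrefl' p.1, hdp⟩, fun h => hne (congrArg Prod.snd h)⟩

/-- a smooth Hamming relation satisfies (μ*3):
`μ(Π'×(Σ↾X''))↾X'' ⊆ μ(Σ)↾X''`, where `Π'` is the set of all `X'`-sequences
(all of `α`) and the `X'`-component relation is reflexive. -/
theorem smooth_hamming_mu3
    {α β : Type*} (le' : α → α → Prop) (le'' : β → β → Prop)
    (hrefl' : ∀ a, le' a a)
    (S : Set (α × β))
    (hsm : IsSmooth (hle le' le'') S) :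
    Prod.snd '' muRel (hle le' le'') (Set.univ ×ˢ (Prod.snd '' S)) ⊆
      Prod.snd '' muRel (hle le' le'') S := by
  rintro _ ⟨p, hp, rfl⟩
  obtain ⟨x, hxS, hxp⟩ := hp.1.2
  obtain ⟨y, hy, rfl | hyx⟩ := hsm.exists_mem_muRel_eq_or_slt hxS
  · exact ⟨y, hy, hxp⟩
  · exact ⟨y, hy, snd_eq_of_mem_muRel_univ_prod hrefl' hp ⟨y, hy.1, rfl⟩ (hxp ▸ hyx.1.2)⟩
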